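/- Let M be an n×n complex matrix (n ≥ 2), let k < ℓ be indices in {0,…,n−1}, and suppose rows k and ℓ of M each have squared Euclidean norm at most 1. Let A be a 2×2 complex unitary matrix and let M' be the matrix obtained from M by replacing row k with A(1,1)·(row k of M) + A(1,2)·(row ℓ of M) and row ℓ with A(2,1)·(row k of M) + A(2,2)·(row ℓ of M), all other rows unchanged. Then Φ(M') ≤ Φ(M) + 2. -/

import Mathlib

open Matrix

/-- The matrix entropy Φ(M) = −∑_{p,q} |M(p,q)|²·log₂ |M(p,q)|². -/
noncomputable def matrixEntropy {n : ℕ} (M : Matrix (Fin n) (Fin n) ℂ) : ℝ :=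
  -∑ p, ∑ q, ‖M p q‖ ^ 2 * Real.logb 2 (‖M p q‖ ^ 2)

/-!
In each column `q` the unitary `A` mixes the pair `(a, b) = (|M(k,q)|², |M(l,q)|²)` into a pair
with the same sum. With `η = negMulLog`, concavity bounds the new pair's entropy by
`2 η((a+b)/2) = η(a+b) + (a+b) log 2`, and subadditivity of `η` gives `η(a+b) ≤ η(a) + η(b)`.
Summing over `q`, the total mass of rows `k` and `l` is at most `2`, hence at most two bits.
-/

open Finset Real

namespace Real

lemma negMulLog_add_le_add {a b : ℝ} (ha : 0 ≤ a) (hb : 0 ≤ b) :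
    negMulLog (a + b) ≤ negMulLog a + negMulLog b := by
  have mul_log_le {x : ℝ} (hx : 0 ≤ x) (hxy : x ≤ a + b) : x * log x ≤ x * log (a + b) := by
    rcases hx.eq_or_lt with rfl | hx
    · simp
    · exact mul_le_mul_of_nonneg_left (log_le_log hx hxy) hx.le
  simp only [negMulLog, neg_mul]
  linarith [mul_log_le ha (by linarith), mul_log_le hb (by linarith)]

lemma two_mul_negMulLog_half {s : ℝ} (hs : 0 ≤ s) :
    2 * negMulLog (s / 2) = negMulLog s + s * log 2 := by
  rcases hs.eq_or_lt with rfl | hs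
  · simp
  · simp only [negMulLog, log_div hs.ne' two_ne_zero]
    ring

lemma negMulLog_add_negMulLog_le_of_add_eq {a b c d : ℝ} (ha : 0 ≤ a) (hb : 0 ≤ b)
    (hc : 0 ≤ c) (hd : 0 ≤ d) (h : c + d = a + b) :
    negMulLog c + negMulLog d ≤ negMulLog a + negMulLog b + (a + b) * log 2 := by
  have concave := concaveOn_negMulLog.2 (Set.mem_Ici.2 hc) (Set.mem_Ici.2 hd)
    (by norm_num : (0 : ℝ) ≤ 1 / 2) (by norm_num : (0 : ℝ) ≤ 1 / 2) (by norm_num)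
  have midpoint : (1 / 2 : ℝ) • c + (1 / 2 : ℝ) • d = (a + b) / 2 := by
    simp only [smul_eq_mul]
    linarith
  rw [midpoint, smul_eq_mul, smul_eq_mul] at concave
  linarith [two_mul_negMulLog_half (add_nonneg ha hb), negMulLog_add_le_add ha hb]

end Real

lemma sum_negMulLog_add_sum_negMulLog_le {ι : Type*} [Fintype ι] {x y x' y' : ι → ℝ}
    (hx : ∀ q, 0 ≤ x q) (hy : ∀ q, 0 ≤ y q) (hx' : ∀ q, 0 ≤ x' q) (hy' : ∀ q, 0 ≤ y' q)
    (h : ∀ q, x' q + y' q = x q + y q) :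
    ∑ q, negMulLog (x' q) + ∑ q, negMulLog (y' q) ≤
      ∑ q, negMulLog (x q) + ∑ q, negMulLog (y q) + (∑ q, x q + ∑ q, y q) * log 2 := by
  simp only [← sum_add_distrib, sum_mul]
  exact sum_le_sum fun q _ =>
    negMulLog_add_negMulLog_le_of_add_eq (hx q) (hy q) (hx' q) (hy' q) (h q)

lemma Fintype.sum_le_sum_add_of_eq_off_pair {ι β : Type*} [Fintype ι]
    [AddCommGroup β] [PartialOrder β] [IsOrderedAddMonoid β] {f g : ι → β} {k l : ι} {c : β}
    (hkl : k ≠ l) (hfg : ∀ p, p ≠ k ∧ p ≠ l → f p = g p) (h : f k + f l ≤ g k + g l + c) :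
    ∑ p, f p ≤ ∑ p, g p + c := by
  have hdiff : ∑ p, (f p - g p) = (f k - g k) + (f l - g l) :=
    Fintype.sum_eq_add k l hkl fun p hp => sub_eq_zero.2 (hfg p hp)
  rw [sum_sub_distrib, sub_add_sub_comm, sub_eq_iff_eq_add] at hdiff
  rw [hdiff, add_comm]
  exact add_le_add_right (sub_le_iff_le_add'.2 h) _

lemma sum_norm_sq_mulVec_of_conjTranspose_mul_self {𝕜 m : Type*} [RCLike 𝕜] [Fintype m]
    [DecidableEq m] {A : Matrix m m 𝕜} (hA : Aᴴ * A = 1) (v : m → 𝕜) :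
    ∑ i, ‖(A *ᵥ v) i‖ ^ 2 = ∑ i, ‖v i‖ ^ 2 := by
  have dot_self (w : m → 𝕜) : star w ⬝ᵥ w = ((∑ i, ‖w i‖ ^ 2 : ℝ) : 𝕜) := by
    simp [dotProduct, RCLike.conj_mul]
  have h : star (A *ᵥ v) ⬝ᵥ A *ᵥ v = star v ⬝ᵥ v := by
    rw [star_mulVec, ← dotProduct_mulVec, mulVec_mulVec, hA, one_mulVec]
  rwa [dot_self, dot_self, RCLike.ofReal_inj] at h

lemma matrixEntropy_mul_log_two {n : ℕ} (M : Matrix (Fin n) (Fin n) ℂ) :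
    matrixEntropy M * log 2 = ∑ p, ∑ q, negMulLog (‖M p q‖ ^ 2) := by
  simp only [matrixEntropy, neg_mul, sum_mul, ← sum_neg_distrib, negMulLog, logb]
  refine sum_congr rfl fun p _ => sum_congr rfl fun q _ => ?_
  field_simp

theorem matrixEntropy_step_general {n : ℕ} (M : Matrix (Fin n) (Fin n) ℂ)
    (k l : Fin n) (hkl : k < l)
    (hrowk : ∑ q, ‖M k q‖ ^ 2 ≤ 1)
    (hrowl : ∑ q, ‖M l q‖ ^ 2 ≤ 1)
    (A : Matrix (Fin 2) (Fin 2) ℂ) (hA : Aᴴ * A = 1)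
    (M' : Matrix (Fin n) (Fin n) ℂ)
    (hM' : M' = fun p q =>
      if p = k then A 0 0 * M k q + A 0 1 * M l q
      else if p = l then A 1 0 * M k q + A 1 1 * M l q
      else M p q) :
    matrixEntropy M' ≤ matrixEntropy M + 2 := by
  have hcol (q : Fin n) : ‖M' k q‖ ^ 2 + ‖M' l q‖ ^ 2 = ‖M k q‖ ^ 2 + ‖M l q‖ ^ 2 := by
    simpa [hM', hkl.ne', Fin.sum_univ_two, mulVec, dotProduct] using
      sum_norm_sq_mulVec_of_conjTranspose_mul_self hA ![M k q, M l q]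
  have hrows := sum_negMulLog_add_sum_negMulLog_le (fun _ => sq_nonneg _)
    (fun _ => sq_nonneg _) (fun _ => sq_nonneg _) (fun _ => sq_nonneg _) hcol
  have hlog2 : 0 < log 2 := log_pos one_lt_two
  have hmass : (∑ q, ‖M k q‖ ^ 2 + ∑ q, ‖M l q‖ ^ 2) * log 2 ≤ 2 * log 2 :=
    mul_le_mul_of_nonneg_right (by linarith) hlog2.le
  refine le_of_mul_le_mul_right ?_ hlog2
  rw [add_mul, matrixEntropy_mul_log_two, matrixEntropy_mul_log_two]
  refine Fintype.sum_le_sum_add_of_eq_off_pair hkl.ne (fun p hp => by simp [hM', hp.1, hp.2]) ?_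
  linarith

theorem matrixEntropy_step {n : ℕ} (hn : 2 ≤ n) (M : Matrix (Fin n) (Fin n) ℂ)
    (k l : Fin n) (hkl : k < l)
    (hrowk : ∑ q, ‖M k q‖ ^ 2 ≤ 1)
    (hrowl : ∑ q, ‖M l q‖ ^ 2 ≤ 1)
    (A : Matrix (Fin 2) (Fin 2) ℂ) (hA : Aᴴ * A = 1)
    (M' : Matrix (Fin n) (Fin n) ℂ)
    (hM' : M' = fun p q =>
      if p = k then A 0 0 * M k q + A 0 1 * M l q
      else if p = l then A 1 0 * M k q + A 1 1 * M l q
      else M p q) :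
    matrixEntropy M' ≤ matrixEntropy M + 2 :=
  matrixEntropy_step_general M k l hkl hrowk hrowl A hA M' hM'
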